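/- arXiv:2007.06731 — 4 statements merged into one kernel-verified Lean document; each statement's English description precedes it below -/
import Mathlib

section
/- Transpose Theorem: every stationary point (W1, W2) of the non-uniform ℓ2 regularized linear autoencoder loss L satisfies W1 = W2ᵀ. -/
open Matrix BigOperators

attribute [local instance] Matrix.frobeniusNormedAddCommGroup Matrix.frobeniusNormedSpace

/-- Squared Frobenius norm. -/
noncomputable def frobSq {a b : ℕ} (M : Matrix (Fin a) (Fin b) ℝ) : ℝ :=
  ∑ i, ∑ j, (M i j) ^ 2

/-- The non-uniform ℓ2 regularized linear autoencoder loss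
`L(W1,W2) = (1/n)‖X − W2W1X‖_F² + ‖Λ^{1/2}W1‖_F² + ‖W2Λ^{1/2}‖_F²`. -/
noncomputable def LAEloss (m k n : ℕ) (X : Matrix (Fin m) (Fin n) ℝ) (lam : Fin k → ℝ)
    (p : Matrix (Fin k) (Fin m) ℝ × Matrix (Fin m) (Fin k) ℝ) : ℝ :=
  (1 / (n : ℝ)) * frobSq (X - p.2 * p.1 * X)
    + frobSq (Matrix.diagonal (fun i => Real.sqrt (lam i)) * p.1)
    + frobSq (p.2 * Matrix.diagonal (fun i => Real.sqrt (lam i)))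

/-
Write `S = X Xᵀ / n` and `Λ` for the diagonal matrix of the `λᵢ`. Stationarity says
`Λ W₁ = W₂ᵀ (1 - W₂ W₁) S` and `W₂ Λ = (1 - W₂ W₁) S W₁ᵀ`. Multiplying these by `W₁ᵀ` and by
`W₂ᵀ` gives `Λ (W₁ W₁ᵀ) = (W₂ᵀ W₂) Λ`; as the `λᵢ` are distinct and positive,
`W₁ W₁ᵀ = W₂ᵀ W₂ = D` is diagonal. Next `Λ W₁ W₂` turns out symmetric, which yields
`Q Λ (Λ + Q) = (Λ + Q) Λ Q` for `Q = W₁ S W₁ᵀ`; so `Q` commutes with `Λ²` and is diagonal too.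
Then the `i`-th rows `a` of `W₁` and `b` of `W₂ᵀ` satisfy `a S = k b` and `b S = λᵢ a + dᵢ k b`
with `k = λᵢ + Qᵢᵢ` and `|a|² = |b|² = dᵢ`. Nonnegativity of the quadratic form of `S` on
`span {a, b}` (a discriminant condition) forces `⟪a, b⟫ ≥ dᵢ`, hence
`|a - b|² = 2 (dᵢ - ⟪a, b⟫) ≤ 0`.
-/

namespace Matrix

variable {ι κ : Type*} [Fintype κ]

lemma isSymm_mul_transpose {R : Type*} [CommSemiring R] (A : Matrix ι κ R) :
    (A * Aᵀ).IsSymm := by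
  simp [IsSymm, transpose_mul]

variable [Fintype ι]

lemma eq_zero_of_forall_trace_mul_transpose_eq_zero {G : Matrix ι κ ℝ}
    (h : ∀ U, trace (G * Uᵀ) = 0) : G = 0 := by
  rw [← trace_mul_conjTranspose_self_eq_zero_iff, conjTranspose_eq_transpose_of_trivial]
  exact h G

variable [DecidableEq ι]

lemma isDiag_of_diagonal_mul_eq_mul_diagonal {R : Type*} [CommRing R] [NoZeroDivisors R]
    {d : ι → R} (hd : Function.Injective d) {M : Matrix ι ι R}
    (h : diagonal d * M = M * diagonal d) : M.IsDiag := by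
  intro i j hij
  have hij' : d i * M i j = M i j * d j := by
    simpa only [diagonal_mul, mul_diagonal] using congrFun (congrFun h i) j
  have : (d i - d j) * M i j = 0 := by linear_combination hij'
  exact (mul_eq_zero.1 this).resolve_left (sub_ne_zero.2 (hd.ne hij))

lemma eq_and_isDiag_of_diagonal_mul_eq_mul_diagonal {lam : ι → ℝ} (hpos : ∀ i, 0 < lam i)
    (hinj : Function.Injective lam) {M N : Matrix ι ι ℝ} (hM : M.IsSymm) (hN : N.IsSymm)
    (h : diagonal lam * M = N * diagonal lam) : M = N ∧ M.IsDiag := by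
  have entry : ∀ i j, lam i * M i j = N i j * lam j := fun i j => by
    simpa only [diagonal_mul, mul_diagonal] using congrFun (congrFun h i) j
  have hMN : M = N := by
    ext i j
    have hji := entry j i
    rw [hM.apply, hN.apply] at hji
    have : (lam i + lam j) * (M i j - N i j) = 0 := by linear_combination entry i j + hji
    exact sub_eq_zero.1 ((mul_eq_zero.1 this).resolve_left (add_pos (hpos i) (hpos j)).ne')
  exact ⟨hMN, isDiag_of_diagonal_mul_eq_mul_diagonal hinj (hMN ▸ h)⟩

lemma PosSemidef.eq_of_vecMul_eq {S : Matrix κ κ ℝ} (hS : S.PosSemidef) {a b : κ → ℝ}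
    {l k d : ℝ} (hl : 0 < l) (ha : a ᵥ* S = k • b) (hb : b ᵥ* S = l • a + (d * k) • b)
    (haa : a ⬝ᵥ a = d) (hbb : b ⬝ᵥ b = d) : a = b := by
  set z := a ⬝ᵥ b with hz
  have hba : b ⬝ᵥ a = z := dotProduct_comm b a
  have form : ∀ x : κ → ℝ, 0 ≤ (x ᵥ* S) ⬝ᵥ x := fun x => by
    simpa [dotProduct_mulVec] using hS.dotProduct_mulVec_nonneg x
  have hsymm : (a ᵥ* S) ⬝ᵥ b = (b ᵥ* S) ⬝ᵥ a := by
    rw [← dotProduct_mulVec, ← vecMul_transpose, (isHermitian_iff_isSymm.1 hS.isHermitian).eq,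
      dotProduct_comm]
  have hcross : k * d = l * d + d * k * z := by
    simpa [ha, hb, smul_dotProduct, add_dotProduct, hbb, haa, hba] using hsymm
  have hkz : 0 ≤ k * z := by simpa [ha, smul_dotProduct, hba] using form a
  have hquad : ∀ t, 0 ≤ (k * z) * (t * t) + (2 * (k * d)) * t + (l * z + d * k * d) := by
    intro t
    have h := form (t • a + b)
    simp only [add_vecMul, smul_vecMul, ha, hb, dotProduct_add, add_dotProduct, smul_dotProduct,
      dotProduct_smul, haa, hbb, hba, ← hz, smul_eq_mul] at h
    linear_combination h - t * hcross
  have hdisc := discrim_le_zero hquad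
  rw [discrim] at hdisc
  have hsub : (a - b) ⬝ᵥ (a - b) = 2 * (d - z) := by
    simp only [sub_dotProduct, dotProduct_sub, haa, hbb, hba, ← hz]; ring
  have hadd : (a + b) ⬝ᵥ (a + b) = 2 * (d + z) := by
    simp only [add_dotProduct, dotProduct_add, haa, hbb, hba, ← hz]; ring
  have self_nonneg : ∀ x : κ → ℝ, 0 ≤ x ⬝ᵥ x := fun x => by
    simpa using dotProduct_self_star_nonneg x
  have hzd : z ≤ d := by linarith [self_nonneg (a - b)]
  have hdz : z = d := by
    rcases eq_or_ne d 0 with hd | hd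
    · linarith [self_nonneg (a + b)]
    have hk : k = l + k * z := mul_left_cancel₀ hd (by linear_combination hcross)
    have hkl : 0 < k * l := mul_pos (by nlinarith) hl
    have hz : 0 ≤ z := (mul_nonneg_iff_of_pos_left (by nlinarith)).1 hkz
    -- `hdisc` reads `4 k l (d² - z²) ≤ 0` once `l = k (1 - z)` is substituted.
    have : k * l * (d ^ 2 - z ^ 2) ≤ 0 := by nlinarith
    nlinarith [(mul_nonpos_iff_pos_imp_nonpos.1 this).1 hkl]
  rw [← sub_eq_zero, ← dotProduct_self_eq_zero, hsub, hdz, sub_self, mul_zero]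

end Matrix

open Matrix

section CriticalPoint

-- `P` and `V` stand for `W₁` and `W₂ᵀ`; `hP` and `hV` are the two stationarity equations.
variable {ι κ : Type*} [Fintype ι] [Fintype κ] [DecidableEq ι]
  {lam : ι → ℝ} {S : Matrix κ κ ℝ} {P V : Matrix ι κ ℝ}

lemma gram_eq_and_isDiag_of_critical (hpos : ∀ i, 0 < lam i) (hinj : Function.Injective lam)
    (hS : S.IsSymm) (hP : diagonal lam * P = V * S - V * Vᵀ * P * S)
    (hV : diagonal lam * V = P * S - P * S * Pᵀ * V) :
    P * Pᵀ = V * Vᵀ ∧ (P * Pᵀ).IsDiag := by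
  refine eq_and_isDiag_of_diagonal_mul_eq_mul_diagonal hpos hinj
    (isSymm_mul_transpose P) (isSymm_mul_transpose V) ?_
  calc diagonal lam * (P * Pᵀ) = (diagonal lam * P) * Pᵀ := (Matrix.mul_assoc _ _ _).symm
    _ = V * (S * Pᵀ - Vᵀ * P * S * Pᵀ) := by
      rw [hP]; simp only [Matrix.sub_mul, Matrix.mul_sub, Matrix.mul_assoc]
    _ = V * (diagonal lam * V)ᵀ := by
      rw [hV]
      simp only [transpose_sub, transpose_mul, transpose_transpose, hS.eq, Matrix.mul_assoc]
    _ = V * Vᵀ * diagonal lam := by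
      rw [transpose_mul, diagonal_transpose, Matrix.mul_assoc]

lemma isDiag_of_critical (hpos : ∀ i, 0 < lam i) (hinj : Function.Injective lam)
    (hS : S.IsSymm) (hP : diagonal lam * P = V * S - V * Vᵀ * P * S)
    (hK : P * S = (diagonal lam + P * S * Pᵀ) * V) : (P * S * Pᵀ).IsDiag := by
  set Λ := diagonal lam with hΛ
  set Q := P * S * Pᵀ with hQ
  set K := Λ + Q
  set Z := P * Vᵀ
  have hΛsymm : Λᵀ = Λ := diagonal_transpose lam
  have hQsymm : Qᵀ = Q := by
    simp only [hQ, transpose_mul, transpose_transpose, hS.eq, Matrix.mul_assoc]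
  have hKsymm : Kᵀ = K := by rw [transpose_add, hΛsymm, hQsymm]
  have hQZ : Q = K * Zᵀ := by
    rw [hQ, hK, transpose_mul, transpose_transpose, Matrix.mul_assoc]
  have hVSV : V * S * Vᵀ = Λ * Z + V * Vᵀ * K * (V * Vᵀ) := by
    have : V * S = Λ * P + V * Vᵀ * (P * S) := by rw [hP]; simp only [Matrix.mul_assoc]; abel
    rw [this, hK]; simp only [Matrix.add_mul, Matrix.mul_assoc]; rfl
  have hΛZ : Zᵀ * Λ = Λ * Z := by
    have hL : (V * S * Vᵀ)ᵀ = V * S * Vᵀ := by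
      simp only [transpose_mul, transpose_transpose, hS.eq, Matrix.mul_assoc]
    have hR : (V * Vᵀ * K * (V * Vᵀ))ᵀ = V * Vᵀ * K * (V * Vᵀ) := by
      simp only [transpose_mul, transpose_transpose, hKsymm, Matrix.mul_assoc]
    rw [hVSV, transpose_add, hR, transpose_mul, hΛsymm] at hL
    exact add_right_cancel hL
  have hZK : Q = Z * K := by rw [← hQsymm, hQZ, transpose_mul, transpose_transpose, hKsymm]
  have hQΛ : Q * Λ = K * Λ * Z := by rw [hQZ, Matrix.mul_assoc K, hΛZ, ← Matrix.mul_assoc]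
  have hcomm : Q * Λ * K = K * Λ * Q := by rw [hQΛ, Matrix.mul_assoc (K * Λ), ← hZK]
  have hsq : diagonal (fun i => lam i * lam i) * Q = Q * diagonal (fun i => lam i * lam i) := by
    rw [← diagonal_mul_diagonal, ← hΛ]
    have h : Q * (Λ * Λ) + Q * Λ * Q = Λ * Λ * Q + Q * Λ * Q := by
      rw [← mul_assoc Q Λ Λ, ← mul_add, hcomm, add_mul, add_mul]
    exact (add_right_cancel h).symm
  refine isDiag_of_diagonal_mul_eq_mul_diagonal (fun i j hij => ?_) hsq
  exact (mul_self_inj (hpos i).le (hpos j).le).1 hij |> hinj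

theorem eq_of_critical (hpos : ∀ i, 0 < lam i) (hinj : Function.Injective lam)
    (hS : S.PosSemidef) (hP : diagonal lam * P = V * S - V * Vᵀ * P * S)
    (hV : diagonal lam * V = P * S - P * S * Pᵀ * V) : P = V := by
  have hSsymm : S.IsSymm := isHermitian_iff_isSymm.1 hS.isHermitian
  obtain ⟨hgram, hPdiag⟩ := gram_eq_and_isDiag_of_critical hpos hinj hSsymm hP hV
  have hK : P * S = (diagonal lam + P * S * Pᵀ) * V := by
    rw [Matrix.add_mul, hV, sub_add_cancel]
  have hQdiag := isDiag_of_critical hpos hinj hSsymm hP hK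
  set d := (P * Pᵀ).diag
  set k := lam + (P * S * Pᵀ).diag
  have hKk : diagonal lam + P * S * Pᵀ = diagonal k := by
    rw [← hQdiag.diagonal_diag, diagonal_add]; rfl
  have hPd : V * Vᵀ = diagonal d := by rw [← hgram, hPdiag.diagonal_diag]
  have hVS : V * S = diagonal lam * P + diagonal d * (diagonal k * V) := by
    rw [← hPd, ← hKk, ← hK, hP]; simp only [Matrix.mul_assoc]; abel
  rw [hKk] at hK
  funext i
  refine hS.eq_of_vecMul_eq (hpos i) (k := k i) (d := d i) ?_ ?_ ?_ ?_
  · rw [← mul_apply_eq_vecMul, hK]; ext j; simp [diagonal_mul]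
  · rw [← mul_apply_eq_vecMul, hVS]; ext j; simp [diagonal_mul, mul_assoc]
  · rfl
  · exact congrFun (congrFun hgram.symm i) i

end CriticalPoint

lemma hasDerivAt_frobSq_add_smul {a b : ℕ} (A B : Matrix (Fin a) (Fin b) ℝ) :
    HasDerivAt (fun t : ℝ => frobSq (A + t • B)) (2 * trace (A * Bᵀ)) 0 := by
  have hentry : ∀ i j, HasDerivAt (fun t : ℝ => (A i j + t * B i j) ^ 2)
      (2 * (A i j * B i j)) 0 := fun i j => by
    refine ((((hasDerivAt_id (0 : ℝ)).mul_const (B i j)).const_add (A i j)).fun_pow 2).congr_deriv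
      (by simp only [Nat.cast_ofNat, id_eq, zero_mul, add_zero, Nat.add_one_sub_one, pow_one,
        one_mul]; ring)
  have hsum :
      (fun t : ℝ => frobSq (A + t • B)) = fun t => ∑ i, ∑ j, (A i j + t * B i j) ^ 2 := by
    funext t; simp [frobSq]
  rw [hsum]
  refine (HasDerivAt.fun_sum fun i _ => HasDerivAt.fun_sum fun j _ => hentry i j).congr_deriv ?_
  simp [trace, mul_apply, Finset.mul_sum]

noncomputable def secondMoment {m n : ℕ} (X : Matrix (Fin m) (Fin n) ℝ) :
    Matrix (Fin m) (Fin m) ℝ :=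
  (1 / (n : ℝ)) • (X * Xᵀ)

section Gradient

variable {m k n : ℕ} (X : Matrix (Fin m) (Fin n) ℝ) {lam : Fin k → ℝ}
  (W1 : Matrix (Fin k) (Fin m) ℝ) (W2 : Matrix (Fin m) (Fin k) ℝ)

lemma sqrt_diagonal_mul_self (hlam : ∀ i, 0 ≤ lam i) :
    diagonal (fun i => √(lam i)) * diagonal (fun i => √(lam i)) = diagonal lam := by
  rw [diagonal_mul_diagonal]
  exact congrArg diagonal (funext fun i => Real.mul_self_sqrt (hlam i))

lemma hasLineDerivAt_LAEloss_fst (hlam : ∀ i, 0 ≤ lam i) (U : Matrix (Fin k) (Fin m) ℝ) :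
    HasLineDerivAt ℝ (LAEloss m k n X lam)
      (2 * trace ((diagonal lam * W1 - (W2ᵀ * secondMoment X - W2ᵀ * W2 * W1 * secondMoment X))
        * Uᵀ)) (W1, W2) (U, 0) := by
  set R := diagonal (fun i => √(lam i))
  have hline : (fun t : ℝ => LAEloss m k n X lam ((W1, W2) + t • (U, 0))) = fun t =>
      1 / (n : ℝ) * frobSq ((X - W2 * W1 * X) + t • -(W2 * U * X))
        + frobSq (R * W1 + t • (R * U)) + frobSq (W2 * R) := by
    funext t
    simp only [LAEloss, Prod.smul_mk, Prod.mk_add_mk, smul_zero, add_zero, Matrix.mul_add,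
      Matrix.add_mul, Matrix.mul_smul, Matrix.smul_mul, R]
    congr 3
    rw [smul_neg, ← sub_eq_add_neg, sub_sub]
  unfold HasLineDerivAt
  rw [hline]
  refine ((((hasDerivAt_frobSq_add_smul (X - W2 * W1 * X) (-(W2 * U * X))).const_mul
    (1 / (n : ℝ))).add (hasDerivAt_frobSq_add_smul (R * W1) (R * U))).add_const
    (frobSq (W2 * R))).congr_deriv ?_
  have hdata : trace ((X - W2 * W1 * X) * (-(W2 * U * X))ᵀ)
      = -trace (W2ᵀ * (X - W2 * W1 * X) * Xᵀ * Uᵀ) := by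
    rw [transpose_neg, Matrix.mul_neg, trace_neg, transpose_mul, transpose_mul,
      ← Matrix.mul_assoc, ← Matrix.mul_assoc, trace_mul_comm _ W2ᵀ]
    simp only [Matrix.mul_assoc]
  have hpenalty : trace (R * W1 * (R * U)ᵀ) = trace (diagonal lam * W1 * Uᵀ) := by
    rw [transpose_mul, diagonal_transpose, ← Matrix.mul_assoc, trace_mul_comm _ R,
      ← sqrt_diagonal_mul_self hlam]
    simp only [Matrix.mul_assoc]
    rfl
  have hmoment : W2ᵀ * secondMoment X - W2ᵀ * W2 * W1 * secondMoment X
      = (1 / (n : ℝ)) • (W2ᵀ * (X - W2 * W1 * X) * Xᵀ) := by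
    simp only [secondMoment, Matrix.mul_sub, Matrix.sub_mul, Matrix.mul_smul, smul_sub,
      Matrix.mul_assoc]
  rw [hdata, hpenalty, Matrix.sub_mul (diagonal lam * W1), trace_sub, hmoment, Matrix.smul_mul,
    trace_smul, smul_eq_mul]
  ring

lemma hasLineDerivAt_LAEloss_snd (hlam : ∀ i, 0 ≤ lam i) (V : Matrix (Fin m) (Fin k) ℝ) :
    HasLineDerivAt ℝ (LAEloss m k n X lam)
      (2 * trace ((W2 * diagonal lam - (secondMoment X * W1ᵀ - W2 * W1 * secondMoment X * W1ᵀ))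
        * Vᵀ)) (W1, W2) (0, V) := by
  set R := diagonal (fun i => √(lam i))
  have hline : (fun t : ℝ => LAEloss m k n X lam ((W1, W2) + t • (0, V))) = fun t =>
      1 / (n : ℝ) * frobSq ((X - W2 * W1 * X) + t • -(V * W1 * X))
        + frobSq (R * W1) + frobSq (W2 * R + t • (V * R)) := by
    funext t
    simp only [LAEloss, Prod.smul_mk, Prod.mk_add_mk, smul_zero, add_zero, Matrix.add_mul,
      Matrix.smul_mul, R]
    congr 3
    rw [smul_neg, ← sub_eq_add_neg, sub_sub]
  unfold HasLineDerivAt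
  rw [hline]
  refine ((((hasDerivAt_frobSq_add_smul (X - W2 * W1 * X) (-(V * W1 * X))).const_mul
    (1 / (n : ℝ))).add_const (frobSq (R * W1))).add
    (hasDerivAt_frobSq_add_smul (W2 * R) (V * R))).congr_deriv ?_
  have hdata : trace ((X - W2 * W1 * X) * (-(V * W1 * X))ᵀ)
      = -trace ((X - W2 * W1 * X) * Xᵀ * W1ᵀ * Vᵀ) := by
    rw [transpose_neg, Matrix.mul_neg, trace_neg, transpose_mul, transpose_mul]
    simp only [Matrix.mul_assoc]
  have hpenalty : trace (W2 * R * (V * R)ᵀ) = trace (W2 * diagonal lam * Vᵀ) := by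
    rw [transpose_mul, diagonal_transpose, ← sqrt_diagonal_mul_self hlam]
    simp only [Matrix.mul_assoc]
    rfl
  have hmoment : secondMoment X * W1ᵀ - W2 * W1 * secondMoment X * W1ᵀ
      = (1 / (n : ℝ)) • ((X - W2 * W1 * X) * Xᵀ * W1ᵀ) := by
    simp only [secondMoment, Matrix.sub_mul, Matrix.mul_smul, Matrix.smul_mul, smul_sub,
      Matrix.mul_assoc]
  rw [hdata, hpenalty, Matrix.sub_mul (W2 * diagonal lam), trace_sub, hmoment, Matrix.smul_mul,
    trace_smul, smul_eq_mul]
  ring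

end Gradient

lemma differentiable_LAEloss (m k n : ℕ) (X : Matrix (Fin m) (Fin n) ℝ) (lam : Fin k → ℝ) :
    Differentiable ℝ (LAEloss m k n X lam) := by
  unfold LAEloss frobSq
  simp only [Matrix.sub_apply, Matrix.mul_apply]
  fun_prop

lemma posSemidef_secondMoment {m n : ℕ} (X : Matrix (Fin m) (Fin n) ℝ) :
    (secondMoment X).PosSemidef :=
  (posSemidef_self_mul_conjTranspose X).smul (by positivity)

lemma stationary_LAEloss {m k n : ℕ} {X : Matrix (Fin m) (Fin n) ℝ} {lam : Fin k → ℝ}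
    {W1 : Matrix (Fin k) (Fin m) ℝ} {W2 : Matrix (Fin m) (Fin k) ℝ} (hlam : ∀ i, 0 ≤ lam i)
    (hstat : fderiv ℝ (LAEloss m k n X lam) (W1, W2) = 0) :
    diagonal lam * W1 = W2ᵀ * secondMoment X - W2ᵀ * W2 * W1 * secondMoment X ∧
      W2 * diagonal lam = secondMoment X * W1ᵀ - W2 * W1 * secondMoment X * W1ᵀ := by
  have hzero : ∀ v, HasLineDerivAt ℝ (LAEloss m k n X lam) 0 (W1, W2) v := fun v => by
    have h := (differentiable_LAEloss m k n X lam (W1, W2)).hasFDerivAt.hasLineDerivAt v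
    rwa [hstat] at h
  constructor
  · refine sub_eq_zero.1 (eq_zero_of_forall_trace_mul_transpose_eq_zero fun U => ?_)
    have h := (hasLineDerivAt_LAEloss_fst X W1 W2 hlam U).unique (hzero _)
    exact (mul_eq_zero.1 h).resolve_left two_ne_zero
  · refine sub_eq_zero.1 (eq_zero_of_forall_trace_mul_transpose_eq_zero fun V => ?_)
    have h := (hasLineDerivAt_LAEloss_snd X W1 W2 hlam V).unique (hzero _)
    exact (mul_eq_zero.1 h).resolve_left two_ne_zero

theorem transpose_theorem_general (m k n : ℕ)
    (X : Matrix (Fin m) (Fin n) ℝ) (lam : Fin k → ℝ)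
    (hlam_pos : ∀ i, 0 < lam i) (hlam_mono : StrictMono lam)
    (W1 : Matrix (Fin k) (Fin m) ℝ) (W2 : Matrix (Fin m) (Fin k) ℝ)
    (hstat : fderiv ℝ (LAEloss m k n X lam) (W1, W2) = 0) :
    W1 = W2ᵀ := by
  obtain ⟨hW1, hW2⟩ := stationary_LAEloss (fun i => (hlam_pos i).le) hstat
  refine eq_of_critical hlam_pos hlam_mono.injective (posSemidef_secondMoment X)
    (by simpa using hW1) ?_
  have hSsymm : (secondMoment X)ᵀ = secondMoment X := (posSemidef_secondMoment X).isHermitian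
  simpa [transpose_sub, transpose_mul, hSsymm, Matrix.mul_assoc] using congrArg transpose hW2

/-- Transpose Theorem: every stationary point `(W1, W2)` of the non-uniform ℓ2 regularized
linear autoencoder loss satisfies `W1 = W2ᵀ`. -/
theorem transpose_theorem (m k n : ℕ) (hk : 1 ≤ k) (hmk : k < m) (hn : 1 ≤ n)
    (X : Matrix (Fin m) (Fin n) ℝ) (lam : Fin k → ℝ)
    (hlam_pos : ∀ i, 0 < lam i) (hlam_mono : StrictMono lam)
    (W1 : Matrix (Fin k) (Fin m) ℝ) (W2 : Matrix (Fin m) (Fin k) ℝ)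
    (hstat : fderiv ℝ (LAEloss m k n X lam) (W1, W2) = 0) :
    W1 = W2ᵀ :=
  transpose_theorem_general m k n X lam hlam_pos hlam_mono W1 W2 hstat
end

section
/- Let l ≤ k, let I = {i1 < ⋯ < il} ⊆ {1,…,k}, let O ∈ ℝ^{k×l} satisfy OᵀO = I_l, and set W2 = U_I · D_I · Oᵀ ∈ ℝ^{m×k}, where D_I = diag((1 − λ_{i1}/σ_{i1}²)^{1/2}, …, (1 − λ_{il}/σ_{il}²)^{1/2}) and U_I ∈ ℝ^{m×l} consists of the columns of U with indices i1,…,il. If the columns of W2 are pairwise orthogonal (wᵢᵀwⱼ = 0 for all i ≠ j), then each column of O contains exactly one nonzero entry, each row of O contains at most one nonzero entry, and every nonzero entry of O equals ±1. -/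
/-!
Since the columns of `U_I` are orthonormal, the Gram matrix of `W2` is `M = O · diag(d) · Oᵀ`
with `d_j = 1 − λ_{i_j}/σ_{i_j}²`, and `OᵀO = 1` gives `M · O = O · diag(d)`, where `M` is
diagonal. Hence every nonzero entry `O_{ia}` forces `d_a = M_{ii}`; the `d_a` being distinct, each
row of `O` has at most one nonzero entry. Two nonzero entries in one column `a` would then make the
off-diagonal Gram entry equal to `O_{ia} d_a O_{ja} ≠ 0`, and a column of unit norm with a single
nonzero entry has that entry equal to `±1`.
-/

open Matrix

namespace Matrix

theorem transpose_mul_self_submatrix_eq_one {R m k l : Type*} [Semiring R] [Fintype m]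
    [Fintype k] [Fintype l] [DecidableEq k] [DecidableEq l] {U : Matrix m k R} (hU : Uᵀ * U = 1)
    {ι : l → k} (hι : Function.Injective ι) :
    (U.submatrix id ι)ᵀ * U.submatrix id ι = 1 := by
  rw [← submatrix_one ι hι, ← hU, submatrix_mul _ _ _ _ _ Function.bijective_id]
  rfl

theorem transpose_mul_self_of_orthonormal_left {R m k l : Type*} [CommSemiring R]
    [Fintype m] [Fintype k] [Fintype l] [DecidableEq k] {V : Matrix m k R} (hV : Vᵀ * V = 1)
    (D : Matrix k k R) (O : Matrix l k R) :
    (V * D * Oᵀ)ᵀ * (V * D * Oᵀ) = O * (Dᵀ * D) * Oᵀ := by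
  simp only [transpose_mul, transpose_transpose, Matrix.mul_assoc]
  rw [← Matrix.mul_assoc Vᵀ V, hV, Matrix.one_mul]

theorem sum_apply_mul_self_eq_one {R κ ν : Type*} [Semiring R] [Fintype κ]
    [DecidableEq ν] {O : Matrix κ ν R} (hO : Oᵀ * O = 1) (a : ν) : ∑ i, O i a * O i a = 1 := by
  simpa [mul_apply] using congrFun₂ hO a a

theorem exists_apply_ne_zero_of_transpose_mul_self_eq_one {R κ ν : Type*} [Semiring R]
    [Nontrivial R] [Fintype κ] [DecidableEq ν] {O : Matrix κ ν R} (hO : Oᵀ * O = 1) (a : ν) :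
    ∃ i, O i a ≠ 0 := by
  by_contra! h
  simpa [h] using sum_apply_mul_self_eq_one hO a

section SignedPermutation

variable {R κ ν : Type*} [Field R] [Fintype κ] [Fintype ν] [DecidableEq κ] [DecidableEq ν]
  {O : Matrix κ ν R} {d : ν → R}

theorem apply_eq_diag_of_isDiag_conj (hO : Oᵀ * O = 1) (hM : (O * diagonal d * Oᵀ).IsDiag)
    {i : κ} {a : ν} (ha : O i a ≠ 0) : d a = (O * diagonal d * Oᵀ) i i := by
  have hMO : diagonal (O * diagonal d * Oᵀ).diag * O = O * diagonal d := by
    rw [hM.diagonal_diag, Matrix.mul_assoc, hO, Matrix.mul_one]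
  have hia := congrFun₂ hMO i a
  rw [diagonal_mul, mul_diagonal, mul_comm] at hia
  exact (mul_left_cancel₀ ha hia).symm

theorem eq_of_apply_ne_zero_of_isDiag_conj (hO : Oᵀ * O = 1)
    (hM : (O * diagonal d * Oᵀ).IsDiag) (hd : Function.Injective d) {i : κ} {a b : ν}
    (ha : O i a ≠ 0) (hb : O i b ≠ 0) : a = b :=
  hd ((apply_eq_diag_of_isDiag_conj hO hM ha).trans (apply_eq_diag_of_isDiag_conj hO hM hb).symm)

theorem apply_eq_zero_of_isDiag_conj (hO : Oᵀ * O = 1) (hM : (O * diagonal d * Oᵀ).IsDiag)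
    (hd : Function.Injective d) (hd0 : ∀ a, d a ≠ 0) {i j : κ} (hij : i ≠ j) {a : ν}
    (ha : O i a ≠ 0) : O j a = 0 := by
  by_contra hja
  have hrow : ∀ b, b ≠ a → O i b = 0 := fun b hba =>
    by_contra fun hib => hba (eq_of_apply_ne_zero_of_isDiag_conj hO hM hd hib ha)
  have hMij : (O * diagonal d * Oᵀ) i j = O i a * d a * O j a := by
    simp only [mul_apply (M := O * diagonal d), mul_diagonal, transpose_apply]
    exact Finset.sum_eq_single a (fun b _ hba => by rw [hrow b hba]; ring) (by simp)
  exact mul_ne_zero (mul_ne_zero ha (hd0 a)) hja (hMij ▸ hM hij)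

theorem apply_eq_one_or_neg_one_of_isDiag_conj (hO : Oᵀ * O = 1)
    (hM : (O * diagonal d * Oᵀ).IsDiag) (hd : Function.Injective d) (hd0 : ∀ a, d a ≠ 0)
    {i : κ} {a : ν} (ha : O i a ≠ 0) : O i a = 1 ∨ O i a = -1 := by
  have hcol := sum_apply_mul_self_eq_one hO a
  rw [Finset.sum_eq_single i (fun j _ hji => by
    rw [apply_eq_zero_of_isDiag_conj hO hM hd hd0 hji.symm ha, zero_mul]) (by simp)] at hcol
  exact mul_self_eq_one_iff.mp hcol

theorem signed_perm_of_isDiag_conj (hO : Oᵀ * O = 1) (hM : (O * diagonal d * Oᵀ).IsDiag)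
    (hd : Function.Injective d) (hd0 : ∀ a, d a ≠ 0) :
    (∀ a, ∃! i, O i a ≠ 0) ∧ (∀ i a b, O i a ≠ 0 → O i b ≠ 0 → a = b) ∧
      (∀ i a, O i a = 0 ∨ O i a = 1 ∨ O i a = -1) := by
  refine ⟨fun a => ?_, fun i a b => eq_of_apply_ne_zero_of_isDiag_conj hO hM hd, fun i a => ?_⟩
  · obtain ⟨i, hi⟩ := exists_apply_ne_zero_of_transpose_mul_self_eq_one hO a
    exact ⟨i, hi, fun j hj => by_contra fun hji =>
      hj (apply_eq_zero_of_isDiag_conj hO hM hd hd0 (Ne.symm hji) hi)⟩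
  · by_cases ha : O i a = 0
    · exact .inl ha
    · exact .inr (apply_eq_one_or_neg_one_of_isDiag_conj hO hM hd hd0 ha)

end SignedPermutation

end Matrix

theorem strictAnti_one_sub_div {α 𝕜 : Type*} [Preorder α] [Field 𝕜] [LinearOrder 𝕜]
    [IsStrictOrderedRing 𝕜] {f g : α → 𝕜} (hf : StrictMono f) (hf0 : ∀ i, 0 < f i)
    (hg : StrictAnti g) (hg0 : ∀ i, 0 < g i) : StrictAnti fun i => 1 - f i / g i :=
  fun _ _ hab => sub_lt_sub_left (div_lt_div₀ (hf hab) (hg hab).le (hf0 _).le (hg0 _)) 1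

/-- If `W2 = U_I · D_I · Oᵀ` (with `OᵀO = I_l`, `D_I = diag((1 − λ_i/σ_i²)^{1/2})_{i∈I}`,
`U_I` the columns of `U` indexed by `I = {i1 < ⋯ < il}`) has pairwise orthogonal columns,
then each column of `O` contains exactly one nonzero entry, each row of `O` contains at
most one nonzero entry, and every nonzero entry of `O` equals `±1`. -/
theorem orth_columns_implies_signed_perm (m k : ℕ) (hk : 1 ≤ k)
    (lam : Fin k → ℝ)
    (hlam_pos : ∀ i, 0 < lam i) (hlam_mono : StrictMono lam)
    (sig2 : Fin k → ℝ) (hs_anti : StrictAnti sig2) (hs_pos : ∀ i, 0 < sig2 i)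
    (U : Matrix (Fin m) (Fin k) ℝ) (hUorth : Uᵀ * U = 1)
    (hlam_last : lam ⟨k - 1, by omega⟩ < sig2 ⟨k - 1, by omega⟩)
    (l : ℕ) (ι : Fin l → Fin k) (hι : StrictMono ι)
    (O : Matrix (Fin k) (Fin l) ℝ) (hO : Oᵀ * O = 1)
    (W2 : Matrix (Fin m) (Fin k) ℝ)
    (hW2 : W2 = (Matrix.of fun (i : Fin m) (j : Fin l) => U i (ι j))
        * Matrix.diagonal (fun j => Real.sqrt (1 - lam (ι j) / sig2 (ι j))) * Oᵀ)
    (horth : ∀ i j : Fin k, i ≠ j → ∑ a, W2 a i * W2 a j = 0) :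
    (∀ j : Fin l, ∃! i : Fin k, O i j ≠ 0) ∧
    (∀ (i : Fin k) (j j' : Fin l), O i j ≠ 0 → O i j' ≠ 0 → j = j') ∧
    (∀ (i : Fin k) (j : Fin l), O i j = 0 ∨ O i j = 1 ∨ O i j = -1) := by
  set d : Fin l → ℝ := fun j => 1 - lam (ι j) / sig2 (ι j)
  have hd_pos : ∀ j, 0 < d j := fun j => by
    have hle : ι j ≤ ⟨k - 1, by omega⟩ := Fin.le_def.mpr (show (ι j : ℕ) ≤ k - 1 by omega)
    have hlt : lam (ι j) < sig2 (ι j) :=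
      (hlam_mono.monotone hle).trans_lt (hlam_last.trans_le (hs_anti.antitone hle))
    exact sub_pos.mpr ((div_lt_one (hs_pos _)).mpr hlt)
  have hd_inj : Function.Injective d :=
    ((strictAnti_one_sub_div hlam_mono hlam_pos hs_anti hs_pos).comp_strictMono hι).injective
  have hUι : (of fun i j => U i (ι j))ᵀ * of (fun i j => U i (ι j)) = 1 :=
    transpose_mul_self_submatrix_eq_one hUorth hι.injective
  have hgram : W2ᵀ * W2 = O * diagonal d * Oᵀ := by
    rw [hW2, transpose_mul_self_of_orthonormal_left hUι, diagonal_transpose,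
      diagonal_mul_diagonal]
    congr 3 with j
    exact Real.mul_self_sqrt (hd_pos j).le
  have hdiag : (O * diagonal d * Oᵀ).IsDiag := fun i j hij => by
    rw [← hgram]
    simpa [mul_apply] using horth i j hij
  exact signed_perm_of_isDiag_conj hO hdiag hd_inj fun j => (hd_pos j).ne'
end

section
/- Condition-number lower bound for deterministic nested dropout: let k ≥ 2, let σ1 > σ2 > ⋯ > σk > 0, and let 1 ≥ p1 > p2 > ⋯ > pk > 0. Then max over i ∈ {1,…,k−1} of 8 p1 σ1² / ((σi² − σ_{i+1}²)(p_i − p_{i+1})) is strictly greater than 8 σ1² (k−1)² / (σ1² − σk²). -/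
/-!
Write `aᵢ = σᵢ² - σᵢ₊₁²` and `bᵢ = pᵢ - pᵢ₊₁` for the `n = k - 1` consecutive gaps. Choosing `j`
with `aⱼ bⱼ` minimal, Cauchy–Schwarz gives
`n² aⱼ bⱼ ≤ (∑ √(aᵢ bᵢ))² ≤ (∑ aᵢ)(∑ bᵢ) = (σ₁² - σₖ²)(p₁ - pₖ) < (σ₁² - σₖ²) p₁`,
so already the `j`-th term of the maximum exceeds the bound.
-/

open Finset

theorem Finset.exists_card_sq_mul_mul_le_sum_mul_sum {ι : Type*} {s : Finset ι} (hs : s.Nonempty)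
    {a b : ι → ℝ} (ha : ∀ i ∈ s, 0 ≤ a i) (hb : ∀ i ∈ s, 0 ≤ b i) :
    ∃ j ∈ s, (#s : ℝ) ^ 2 * (a j * b j) ≤ (∑ i ∈ s, a i) * ∑ i ∈ s, b i := by
  obtain ⟨j, hj, hmin⟩ := s.exists_min_image (fun i => a i * b i) hs
  refine ⟨j, hj, ?_⟩
  have hsq : √(a j * b j) ^ 2 = a j * b j := Real.sq_sqrt (mul_nonneg (ha j hj) (hb j hj))
  calc (#s : ℝ) ^ 2 * (a j * b j) = (∑ _i ∈ s, √(a j * b j)) ^ 2 := by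
        rw [sum_const, nsmul_eq_mul, mul_pow, hsq]
    _ ≤ (∑ i ∈ s, a i) * ∑ i ∈ s, b i :=
        sum_sq_le_sum_mul_sum_of_sq_le_mul s ha hb fun i hi => hsq.trans_le (hmin i hi)

theorem Fin.sum_univ_castSucc_sub_succ {M : Type*} [AddCommGroup M] {n : ℕ}
    (f : Fin (n + 1) → M) : ∑ i : Fin n, (f i.castSucc - f i.succ) = f 0 - f (Fin.last n) := by
  induction n with
  | zero => simp
  | succ n ih =>
    rw [Fin.sum_univ_castSucc]
    simp only [Fin.succ_castSucc]
    rw [ih fun i => f i.castSucc]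
    simp

theorem Antitone.exists_sq_mul_gap_mul_gap_le {n : ℕ} (hn : n ≠ 0) {f g : Fin (n + 1) → ℝ}
    (hf : Antitone f) (hg : Antitone g) :
    ∃ j : Fin n, (n : ℝ) ^ 2 * ((f j.castSucc - f j.succ) * (g j.castSucc - g j.succ))
      ≤ (f 0 - f (Fin.last n)) * (g 0 - g (Fin.last n)) := by
  have : Nonempty (Fin n) := ⟨⟨0, Nat.pos_of_ne_zero hn⟩⟩
  obtain ⟨j, -, hj⟩ := exists_card_sq_mul_mul_le_sum_mul_sum univ_nonempty
    (fun (j : Fin n) _ => sub_nonneg.2 (hf j.castSucc_lt_succ.le))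
    (fun (j : Fin n) _ => sub_nonneg.2 (hg j.castSucc_lt_succ.le))
  rw [card_univ, Fintype.card_fin, Fin.sum_univ_castSucc_sub_succ,
    Fin.sum_univ_castSucc_sub_succ] at hj
  exact ⟨j, hj⟩

/-- Condition-number lower bound for deterministic nested dropout:
the maximum over `i ∈ {1,…,k−1}` of `8 p1 σ1² / ((σi² − σ_{i+1}²)(p_i − p_{i+1}))`
is strictly greater than `8 σ1² (k−1)² / (σ1² − σk²)`. -/
theorem nested_dropout_condition_number_bound (k : ℕ) (hk : 2 ≤ k)
    (sigma p : Fin k → ℝ)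
    (hs_anti : StrictAnti sigma) (hs_pos : ∀ i, 0 < sigma i)
    (hp_anti : StrictAnti p) (hp_pos : ∀ i, 0 < p i) :
    sSup {x : ℝ | ∃ i : Fin k, ∃ h : (i : ℕ) + 1 < k,
        x = 8 * p ⟨0, by omega⟩ * (sigma ⟨0, by omega⟩) ^ 2
          / (((sigma i) ^ 2 - (sigma ⟨(i : ℕ) + 1, h⟩) ^ 2)
              * (p i - p ⟨(i : ℕ) + 1, h⟩))}
      > 8 * (sigma ⟨0, by omega⟩) ^ 2 * ((k : ℝ) - 1) ^ 2
        / ((sigma ⟨0, by omega⟩) ^ 2 - (sigma ⟨k - 1, by omega⟩) ^ 2) := by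
  obtain ⟨n, rfl⟩ : ∃ n, k = n + 1 := ⟨k - 1, by omega⟩
  set s : Fin (n + 1) → ℝ := fun i => sigma i ^ 2
  have hs : StrictAnti s := fun i j hij => pow_lt_pow_left₀ (hs_anti hij) (hs_pos j).le two_ne_zero
  obtain ⟨j, hj⟩ := hs.antitone.exists_sq_mul_gap_mul_gap_le (by omega) hp_anti.antitone
  have hgap : 0 < (s j.castSucc - s j.succ) * (p j.castSucc - p j.succ) :=
    mul_pos (sub_pos.2 (hs j.castSucc_lt_succ)) (sub_pos.2 (hp_anti j.castSucc_lt_succ))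
  have hA : 0 < s 0 - s (Fin.last n) := sub_pos.2 (hs (Fin.lt_def.2 (by simp; omega)))
  refine lt_csSup_of_lt ?_ ⟨j.castSucc, by simp, rfl⟩ ?_
  · exact Set.Finite.bddAbove ((Set.toFinite _).dependent_image _ |>.subset
      (by rintro x ⟨i, h, rfl⟩; exact ⟨i, h, rfl⟩))
  show 8 * s 0 * (((n + 1 : ℕ) : ℝ) - 1) ^ 2 / (s 0 - s (Fin.last n))
    < 8 * p 0 * s 0 / ((s j.castSucc - s j.succ) * (p j.castSucc - p j.succ))
  rw [Nat.cast_succ, add_sub_cancel_right, div_lt_div_iff₀ hA hgap]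
  calc 8 * s 0 * (n : ℝ) ^ 2 * ((s j.castSucc - s j.succ) * (p j.castSucc - p j.succ))
      ≤ 8 * s 0 * ((s 0 - s (Fin.last n)) * (p 0 - p (Fin.last n))) := by
        rw [mul_assoc]; gcongr
    _ < 8 * s 0 * ((s 0 - s (Fin.last n)) * p 0) := by
        gcongr
        · exact mul_pos (by norm_num) (pow_pos (hs_pos 0) 2)
        · exact sub_lt_self _ (hp_pos _)
    _ = 8 * p 0 * s 0 * (s 0 - s (Fin.last n)) := by ring
end

section
/- Lyapunov decrease along the rotation flow: let X ∈ ℝ^{m×n}, Σ = (1/n)XXᵀ, let d1 > d2 > ⋯ > dk > 0, D = diag(d1,…,dk), let σ1² ≥ ⋯ ≥ σk² be the k largest eigenvalues of Σ and S² = diag(σ1²,…,σk²), and define V(W) = Tr((S² − WΣWᵀ)D) for W ∈ ℝ^{k×m}. Suppose W : ℝ → ℝ^{k×m} is differentiable and satisfies W'(t) = A(W(t)) · W(t) for all t, where A(W) = (1/(2n)) (ut(W XXᵀ Wᵀ) − lt(W XXᵀ Wᵀ)), with ut(M) (resp. lt(M)) the matrix obtained from M by setting to zero all entries strictly below (resp.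 strictly above) the diagonal. Then for all t, writing wᵢ(t)ᵀ for the i-th row of W(t), d/dt V(W(t)) = Σ_{i=2}^{k} Σ_{j=1}^{i−1} (d_i − d_j) (w_i(t)ᵀ Σ w_j(t))², and in particular d/dt V(W(t)) ≤ 0. -/
/-
With `G = WΣWᵀ` (symmetric), the flow `W' = AW` gives `d/dt V = -Tr((AG + GAᵀ)D) = -2 Tr(AGD)`,
the two terms agreeing by transposition since `G` and `D` are symmetric. As `XXᵀ = nΣ`, the
generator is `A = ½(ut G - lt G)`, whose `(i, j)` entry is `±½ G_ij` according to the sign of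
`j - i`; hence `-2 Tr(AGD) = Tr((lt G - ut G)GD) = Σ_{j<i} (d_i - d_j) G_ij²`, which is `≤ 0`
because `d` is decreasing.
-/

open Matrix BigOperators

attribute [local instance] Matrix.frobeniusNormedAddCommGroup Matrix.frobeniusNormedSpace

section Calculus

variable {𝕜 : Type*} [NontriviallyNormedField 𝕜] [CompleteSpace 𝕜]
  {l m p : Type*} [Fintype l] [Fintype m] [Fintype p] {t : 𝕜}

theorem HasDerivAt.matrix_mul {A : 𝕜 → Matrix l m 𝕜} {B : 𝕜 → Matrix m p 𝕜}
    {A' : Matrix l m 𝕜} {B' : Matrix m p 𝕜} (hA : HasDerivAt A A' t) (hB : HasDerivAt B B' t) :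
    HasDerivAt (fun s => A s * B s) (A' * B t + A t * B') t := by
  let mulCLM : Matrix l m 𝕜 →L[𝕜] Matrix m p 𝕜 →L[𝕜] Matrix l p 𝕜 :=
    LinearMap.toContinuousLinearMap
      (LinearMap.toContinuousLinearMap.toLinearMap ∘ₗ mulLinearMap 𝕜)
  rw [add_comm]
  exact mulCLM.hasDerivAt_of_bilinear (fun _ => hA) (fun _ => hB)

theorem HasDerivAt.matrix_transpose {A : 𝕜 → Matrix l m 𝕜} {A' : Matrix l m 𝕜}
    (hA : HasDerivAt A A' t) : HasDerivAt (fun s => (A s)ᵀ) A'ᵀ t :=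
  (LinearMap.toContinuousLinearMap
    (transposeLinearEquiv l m 𝕜 𝕜).toLinearMap).hasFDerivAt.comp_hasDerivAt t hA

theorem HasDerivAt.matrix_trace {A : 𝕜 → Matrix m m 𝕜} {A' : Matrix m m 𝕜}
    (hA : HasDerivAt A A' t) : HasDerivAt (fun s => (A s).trace) A'.trace t :=
  (LinearMap.toContinuousLinearMap (traceLinearMap m 𝕜 𝕜)).hasFDerivAt.comp_hasDerivAt t hA

theorem hasDerivAt_trace_sub_mul_mul_transpose_mul {W : 𝕜 → Matrix l m 𝕜} {A : Matrix l l 𝕜}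
    (hW : HasDerivAt W (A * W t) t) (S : Matrix l l 𝕜) {C : Matrix m m 𝕜} (hC : Cᵀ = C)
    {D : Matrix l l 𝕜} (hD : Dᵀ = D) :
    HasDerivAt (fun s => ((S - W s * C * (W s)ᵀ) * D).trace)
      (-(2 * (A * (W t * C * (W t)ᵀ) * D).trace)) t := by
  have hG := (hW.matrix_mul (hasDerivAt_const t C)).matrix_mul hW.matrix_transpose
  refine (((hasDerivAt_const t S).sub hG).matrix_mul
    (hasDerivAt_const t D)).matrix_trace.congr_deriv ?_
  have hsymm : (W t * C * (A * W t)ᵀ * D).trace = (A * (W t * C * (W t)ᵀ) * D).trace := by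
    rw [← trace_transpose]
    simp only [transpose_mul, transpose_transpose, hC, hD, Matrix.mul_assoc]
    rw [trace_mul_comm]
    simp only [Matrix.mul_assoc]
  simp only [Pi.sub_apply, Matrix.mul_zero, add_zero, zero_sub, neg_mul, trace_neg, add_mul,
    trace_add, hsymm]
  rw [← Matrix.mul_assoc A, two_mul]
  simp only [Matrix.mul_assoc]

end Calculus

section TriangularParts

variable {ι R : Type*} [LinearOrder ι] [CommRing R]

def upperTriangularPart (M : Matrix ι ι R) : Matrix ι ι R :=
  of fun i j => if j < i then 0 else M i j

def lowerTriangularPart (M : Matrix ι ι R) : Matrix ι ι R :=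
  of fun i j => if i < j then 0 else M i j

theorem upperTriangularPart_smul (c : R) (M : Matrix ι ι R) :
    upperTriangularPart (c • M) = c • upperTriangularPart M := by
  ext i j
  simp [upperTriangularPart]

theorem lowerTriangularPart_smul (c : R) (M : Matrix ι ι R) :
    lowerTriangularPart (c • M) = c • lowerTriangularPart M := by
  ext i j
  simp [lowerTriangularPart]

theorem lowerTriangularPart_sub_upperTriangularPart_apply (M : Matrix ι ι R) (i j : ι) :
    (lowerTriangularPart M - upperTriangularPart M) i j =
      (if j < i then M i j else 0) - (if i < j then M i j else 0) := by
  rcases lt_trichotomy i j with h | rfl | h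
  · simp [lowerTriangularPart, upperTriangularPart, h, h.not_gt]
  · simp [lowerTriangularPart, upperTriangularPart]
  · simp [lowerTriangularPart, upperTriangularPart, h, h.not_gt]

theorem trace_lowerTriangularPart_sub_upperTriangularPart_mul_mul_diagonal [Fintype ι]
    {G : Matrix ι ι R} (hG : Gᵀ = G) (d : ι → R) :
    ((lowerTriangularPart G - upperTriangularPart G) * G * diagonal d).trace =
      ∑ i, ∑ j, if j < i then (d i - d j) * G i j ^ 2 else 0 := by
  have hG' (i j : ι) : G j i = G i j := by rw [← transpose_apply G i j, hG]
  have hswap : ∑ i, ∑ j, (if i < j then d i * G i j ^ 2 else 0) =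
      ∑ i, ∑ j, (if j < i then d j * G i j ^ 2 else 0) := by
    rw [Finset.sum_comm]
    simp only [hG']
  calc ((lowerTriangularPart G - upperTriangularPart G) * G * diagonal d).trace
      = ∑ i, ∑ j, ((if j < i then d i * G i j ^ 2 else 0) -
          (if i < j then d i * G i j ^ 2 else 0)) := by
        simp only [trace, diag, mul_diagonal]
        simp only [mul_apply, Finset.sum_mul]
        refine Finset.sum_congr rfl fun i _ => Finset.sum_congr rfl fun j _ => ?_
        rw [lowerTriangularPart_sub_upperTriangularPart_apply, hG']
        split_ifs <;> ring
    _ = ∑ i, ∑ j, if j < i then (d i - d j) * G i j ^ 2 else 0 := by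
        simp only [Finset.sum_sub_distrib]
        rw [hswap, ← Finset.sum_sub_distrib]
        refine Finset.sum_congr rfl fun i _ => ?_
        rw [← Finset.sum_sub_distrib]
        refine Finset.sum_congr rfl fun j _ => ?_
        split_ifs <;> ring

end TriangularParts

theorem sum_sum_ite_lt_sub_mul_sq_nonpos {ι R : Type*} [Fintype ι] [LinearOrder ι]
    [CommRing R] [LinearOrder R] [IsOrderedRing R] {d : ι → R} (hd : Antitone d)
    (G : Matrix ι ι R) : ∑ i, ∑ j, (if j < i then (d i - d j) * G i j ^ 2 else 0) ≤ 0 :=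
  Finset.sum_nonpos fun i _ => Finset.sum_nonpos fun j _ => by
    split_ifs with hji
    · exact mul_nonpos_of_nonpos_of_nonneg (sub_nonpos.2 (hd hji.le)) (sq_nonneg _)
    · exact le_rfl

theorem lyapunov_decrease_rotation_flow_general (m k n : ℕ) (hn : 1 ≤ n)
    (X : Matrix (Fin m) (Fin n) ℝ)
    (d : Fin k → ℝ) (hd_anti : StrictAnti d)
    (sig2 : Fin k → ℝ)
    (W : ℝ → Matrix (Fin k) (Fin m) ℝ)
    (hW : ∀ t, HasDerivAt W
      (((1 / (2 * (n : ℝ))) • ((Matrix.of fun i j : Fin k =>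
            if j < i then 0 else (W t * (X * Xᵀ) * (W t)ᵀ) i j)
        - (Matrix.of fun i j : Fin k =>
            if i < j then 0 else (W t * (X * Xᵀ) * (W t)ᵀ) i j))) * W t) t) :
    ∀ t : ℝ,
      HasDerivAt (fun s => Matrix.trace
          ((Matrix.diagonal sig2 - W s * ((1 / (n : ℝ)) • (X * Xᵀ)) * (W s)ᵀ)
            * Matrix.diagonal d))
        (∑ i : Fin k, ∑ j : Fin k, if j < i then
            (d i - d j) * ((W t * ((1 / (n : ℝ)) • (X * Xᵀ)) * (W t)ᵀ) i j) ^ 2 else 0) t ∧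
      (∑ i : Fin k, ∑ j : Fin k, if j < i then
          (d i - d j) * ((W t * ((1 / (n : ℝ)) • (X * Xᵀ)) * (W t)ᵀ) i j) ^ 2 else 0) ≤ 0 := by
  intro t
  have hn0 : (n : ℝ) ≠ 0 := Nat.cast_ne_zero.2 (by omega)
  set C : Matrix (Fin m) (Fin m) ℝ := (1 / (n : ℝ)) • (X * Xᵀ)
  set G := W t * C * (W t)ᵀ
  have hC : Cᵀ = C := by simp only [C, transpose_smul, transpose_mul, transpose_transpose]
  have hG : Gᵀ = G := by simp only [G, transpose_mul, transpose_transpose, hC, Matrix.mul_assoc]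
  set M := W t * (X * Xᵀ) * (W t)ᵀ
  have hM : M = (n : ℝ) • G := by
    simp only [M, G, C, Matrix.mul_smul, Matrix.smul_mul, smul_smul, mul_one_div_cancel hn0,
      one_smul]
  have hW' : HasDerivAt W
      ((1 / (2 * (n : ℝ))) • (upperTriangularPart M - lowerTriangularPart M) * W t) t := hW t
  have hA : (1 / (2 * (n : ℝ))) • (upperTriangularPart M - lowerTriangularPart M) =
      (-(1 / 2) : ℝ) • (lowerTriangularPart G - upperTriangularPart G) := by
    rw [hM, upperTriangularPart_smul, lowerTriangularPart_smul, ← smul_sub, smul_smul, ← neg_sub,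
      smul_neg, ← neg_smul]
    congr 1
    field_simp
  rw [hA] at hW'
  have hV :=
    hasDerivAt_trace_sub_mul_mul_transpose_mul hW' (diagonal sig2) hC (diagonal_transpose d)
  rw [Matrix.smul_mul, Matrix.smul_mul, trace_smul, smul_eq_mul,
    trace_lowerTriangularPart_sub_upperTriangularPart_mul_mul_diagonal hG] at hV
  exact ⟨hV.congr_deriv (by ring), sum_sum_ite_lt_sub_mul_sq_nonpos hd_anti.antitone G⟩

/-- Lyapunov decrease along the rotation flow: with `Σ = (1/n)XXᵀ`,
`V(W) = Tr((S² − WΣWᵀ)D)` (`D = diag(d1,…,dk)`, `d1 > ⋯ > dk > 0`, `S² = diag(σ1²,…,σk²)`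
the `k` largest eigenvalues of `Σ`), and `W` solving `W' = A(W)W` where
`A(W) = (1/(2n))(ut(WXXᵀWᵀ) − lt(WXXᵀWᵀ))`, one has
`d/dt V(W(t)) = Σ_{i=2}^{k} Σ_{j<i} (d_i − d_j)(w_iᵀΣw_j)² ≤ 0`. -/
theorem lyapunov_decrease_rotation_flow (m k n : ℕ) (hk : 1 ≤ k) (hmk : k < m) (hn : 1 ≤ n)
    (X : Matrix (Fin m) (Fin n) ℝ)
    (d : Fin k → ℝ) (hd_anti : StrictAnti d) (hd_pos : ∀ i, 0 < d i)
    (sig2 : Fin k → ℝ) (hs_anti : Antitone sig2)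
    (hs_eig : ∀ i, ∃ v : Fin m → ℝ, v ≠ 0 ∧
        ((1 / (n : ℝ)) • (X * Xᵀ)) *ᵥ v = sig2 i • v)
    (W : ℝ → Matrix (Fin k) (Fin m) ℝ)
    (hW : ∀ t, HasDerivAt W
      (((1 / (2 * (n : ℝ))) • ((Matrix.of fun i j : Fin k =>
            if j < i then 0 else (W t * (X * Xᵀ) * (W t)ᵀ) i j)
        - (Matrix.of fun i j : Fin k =>
            if i < j then 0 else (W t * (X * Xᵀ) * (W t)ᵀ) i j))) * W t) t) :
    ∀ t : ℝ,
      HasDerivAt (fun s => Matrix.trace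
          ((Matrix.diagonal sig2 - W s * ((1 / (n : ℝ)) • (X * Xᵀ)) * (W s)ᵀ)
            * Matrix.diagonal d))
        (∑ i : Fin k, ∑ j : Fin k, if j < i then
            (d i - d j) * ((W t * ((1 / (n : ℝ)) • (X * Xᵀ)) * (W t)ᵀ) i j) ^ 2 else 0) t ∧
      (∑ i : Fin k, ∑ j : Fin k, if j < i then
          (d i - d j) * ((W t * ((1 / (n : ℝ)) • (X * Xᵀ)) * (W t)ᵀ) i j) ^ 2 else 0) ≤ 0 :=
  lyapunov_decrease_rotation_flow_general m k n hn X d hd_anti sig2 W hW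
end
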